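/- Let r ≥ 1 and let (v_1,…,v_r) be a system of linear functionals on ℂ[x]. Suppose that for every 0 ≤ j ≤ r the moment matrix M^{[j]} of the system V^{[j]} := (v_{j+1},…,v_r, x·v_1,…,x·v_j) admits a Gauss–Borel factorisation M^{[j]} = A^{[j]} B^{[j]}. Define α_{(r+1)n} := B^{[r]}_{n,n} / B^{[0]}_{n,n} and α_{(r+1)n+i} := B^{[i−1]}_{n+1,n+1} / B^{[i]}_{n,n} for all n ∈ ℕ and 1 ≤ i ≤ r, and let L_1,…,L_r, U be the bidiagonal matrices built from the sequence (α_n). Then: (a) α_{(r+1)n} = A^{[0]}_{n+1,n} − A^{[r]}_{n,n−1} (with the convention A^{[r]}_{0,−1} := 0) and α_{(r+1)n+i} = A^{[i]}_{n+1,n} − A^{[i−1]}_{n+1,n} for 1 ≤ i ≤ r; (b) for every 0 ≤ j ≤ r, the Hessenberg matrix H^{[j]} determined by A^{[j]} H^{[j]} = Λ A^{[j]} admits the bidiagonal factorisation H^{[j]} = L_{j+1} ⋯ L_r · U · L_1 ⋯ L_j (entrywise product); in particular H^{[0]} = L_1 ⋯ L_r U. -/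

import Mathlib

/-!
The moment matrices of consecutive systems are shifts of one another: `M^{[j+1]}` is `M^{[j]}`
without its first column, and `M^{[r]}` is `M^{[0]}` without its first row (both because
`M^{[j]}_{n,ℓ}` only depends on `n` and `j + ℓ`). Comparing Gauss–Borel factorisations,
`E = (A^{[j]})⁻¹ A^{[j+1]}` is unit lower triangular and `E B^{[j+1]}` is `B^{[j]}` with its first
column removed, which has only one subdiagonal; so `E = L_{j+1}`, with entries read off the
diagonals of the `B`'s. In the same way `(A^{[r]})⁻¹ Λ A^{[0]} = U`. Comparing `(n+1, n)` entries
gives (a), and chaining `A^{[j]} L_{j+1} ⋯ L_r U L_1 ⋯ L_j = Λ A^{[j]} = A^{[j]} H^{[j]}` and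
cancelling `A^{[j]}` gives (b).
-/

open Polynomial Finset

noncomputable section

/-- A linear functional on `ℂ[x]`. -/
abbrev LF := Polynomial ℂ →ₗ[ℂ] ℂ

/-- `x·u` is the functional `p ↦ ⟨u, x p⟩`. -/
def xMul (u : LF) : LF := u.comp (LinearMap.mulLeft ℂ (Polynomial.X : Polynomial ℂ))

/-- The moment matrix of a system of `r` linear functionals (0-indexed). -/
def momentMatrix (r : ℕ) (v : ℕ → LF) (n ℓ : ℕ) : ℂ :=
  v (ℓ % r) (Polynomial.X ^ (ℓ / r + n))

/-- The Darboux-transformed system `V^{[j]} = (v_{j+1},…,v_r, x·v_1,…,x·v_j)`. -/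
def Vsys (r j : ℕ) (v : ℕ → LF) : ℕ → LF :=
  fun i => if j + i < r then v (j + i) else xMul (v (j + i - r))

/-- A Gauss–Borel factorisation `M = A·B` of the moment matrix. -/
structure GaussBorel (r : ℕ) (v : ℕ → LF) (A B : ℕ → ℕ → ℂ) : Prop where
  A_diag : ∀ n, A n n = 1
  A_upper : ∀ n ℓ, n < ℓ → A n ℓ = 0
  B_lower : ∀ n ℓ, ℓ < n → B n ℓ = 0
  B_diag : ∀ n, B n n ≠ 0
  factor : ∀ n ℓ, momentMatrix r v n ℓ = ∑ k ∈ Finset.range (n + 1), A n k * B k ℓ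

/-- The upper-bidiagonal matrix `U`: `U_{n,n} = α_{(r+1)n}`, `U_{n,n+1} = 1`. -/
def Umat (r : ℕ) (α : ℕ → ℂ) : ℕ → ℕ → ℂ := fun n ℓ =>
  if ℓ = n then α ((r + 1) * n) else if ℓ = n + 1 then 1 else 0

/-- The lower-bidiagonal matrix `L_k`: `(L_k)_{n,n} = 1`, `(L_k)_{n+1,n} = α_{(r+1)n+k}`. -/
def Lmat (r k : ℕ) (α : ℕ → ℂ) : ℕ → ℕ → ℂ := fun n ℓ =>
  if ℓ = n then 1 else if n = ℓ + 1 then α ((r + 1) * ℓ + k) else 0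

/-- Entrywise product of two infinite matrices whose left factor has row `n`
supported in columns `< n+2` (true for all `L_k` and `U`); the sum is finite. -/
def bidMul (X Y : ℕ → ℕ → ℂ) : ℕ → ℕ → ℂ := fun n ℓ =>
  ∑ k ∈ Finset.range (n + 2), X n k * Y k ℓ

/-- Product of a list of such matrices. -/
def listProd : List (ℕ → ℕ → ℂ) → ℕ → ℕ → ℂ
  | [] => fun n ℓ => if n = ℓ then 1 else 0
  | X :: rest => bidMul X (listProd rest)

/-- The list of factors `L_{j+1}, …, L_r, U, L_1, …, L_j`. -/
def factorList (r j : ℕ) (α : ℕ → ℂ) : List (ℕ → ℕ → ℂ) :=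
  ((List.range' (j + 1) (r - j)).map fun k => Lmat r k α) ++ [Umat r α]
    ++ ((List.range' 1 j).map fun k => Lmat r k α)

/-- The coefficients `α_{(r+1)n} = B^{[r]}_{n,n}/B^{[0]}_{n,n}` and
`α_{(r+1)n+i} = B^{[i-1]}_{n+1,n+1}/B^{[i]}_{n,n}` for `1 ≤ i ≤ r`. -/
def alphaGB (r : ℕ) (B : ℕ → ℕ → ℕ → ℂ) (m : ℕ) : ℂ :=
  if m % (r + 1) = 0 then
    B r (m / (r + 1)) (m / (r + 1)) / B 0 (m / (r + 1)) (m / (r + 1))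
  else
    B (m % (r + 1) - 1) (m / (r + 1) + 1) (m / (r + 1) + 1)
      / B (m % (r + 1)) (m / (r + 1)) (m / (r + 1))

section InfiniteMatrix

variable {R : Type*}

theorem sum_range_mul_eq_add [Semiring R] {a b : ℕ → R} {N i j : ℕ} (hij : i ≠ j)
    (ha : ∀ k, N ≤ k → a k = 0) (hb : ∀ k, k ≠ i → k ≠ j → b k = 0) :
    ∑ k ∈ range N, a k * b k = a i * b i + a j * b j :=
  Finset.sum_eq_add i j hij (fun k _ hk => by rw [hb k hk.1 hk.2, mul_zero])
    (fun h => by rw [ha i (by simpa using h), zero_mul])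
    (fun h => by rw [ha j (by simpa using h), zero_mul])

theorem sum_mul_sum_comm_of_band [Semiring R] {a : ℕ → R} {S : ℕ → ℕ → R} {c : ℕ}
    (hS : ∀ k m, k + c ≤ m → S k m = 0) (w : ℕ → R) (N : ℕ) :
    ∑ k ∈ range (N + 1), a k * ∑ m ∈ range (k + c), S k m * w m
      = ∑ m ∈ range (N + c), (∑ k ∈ range (N + 1), a k * S k m) * w m := by
  have extend : ∀ k ∈ range (N + 1), a k * ∑ m ∈ range (k + c), S k m * w m
      = ∑ m ∈ range (N + c), a k * (S k m * w m) := by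
    intro k hk
    rw [Finset.mul_sum]
    refine Finset.sum_subset (Finset.range_subset_range.2 (by simp at hk; omega)) ?_
    intro m _ hm
    rw [hS k m (by simpa using hm), zero_mul, mul_zero]
  simp_rw [Finset.sum_congr rfl extend, Finset.sum_mul, mul_assoc]
  exact Finset.sum_comm

variable [Ring R]

def lowerInv (A : ℕ → ℕ → R) : ℕ → ℕ → R
  | n, ℓ => if n = ℓ then 1 else if ℓ < n then -∑ k : Fin n, A n k * lowerInv A k ℓ else 0

theorem lowerInv_self (A : ℕ → ℕ → R) (n : ℕ) : lowerInv A n n = 1 := by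
  rw [lowerInv, if_pos rfl]

theorem lowerInv_of_lt (A : ℕ → ℕ → R) {n ℓ : ℕ} (h : n < ℓ) : lowerInv A n ℓ = 0 := by
  rw [lowerInv, if_neg h.ne, if_neg (by omega)]

theorem lowerInv_of_gt (A : ℕ → ℕ → R) {n ℓ : ℕ} (h : ℓ < n) :
    lowerInv A n ℓ = -∑ k ∈ range n, A n k * lowerInv A k ℓ := by
  rw [lowerInv, if_neg h.ne', if_pos h, Fin.sum_univ_eq_sum_range (fun k => A n k * lowerInv A k ℓ)]

theorem sum_mul_lowerInv {A : ℕ → ℕ → R} (hA : ∀ n, A n n = 1) (n m : ℕ) :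
    ∑ k ∈ range (n + 1), A n k * lowerInv A k m = if n = m then 1 else 0 := by
  rw [Finset.sum_range_succ, hA, one_mul]
  rcases lt_trichotomy n m with h | rfl | h
  · rw [if_neg h.ne, lowerInv_of_lt A h, add_zero]
    exact Finset.sum_eq_zero fun k hk => by
      rw [lowerInv_of_lt A (by simp at hk; omega), mul_zero]
  · rw [if_pos rfl, lowerInv_self, add_eq_right]
    exact Finset.sum_eq_zero fun k hk => by
      rw [lowerInv_of_lt A (by simpa using hk), mul_zero]
  · rw [if_neg h.ne', lowerInv_of_gt A h, add_neg_cancel]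

theorem sum_mul_sum_lowerInv_mul {A : ℕ → ℕ → R} (hA : ∀ n, A n n = 1) (w : ℕ → R) (n : ℕ) :
    ∑ k ∈ range (n + 1), A n k * ∑ m ∈ range (k + 1), lowerInv A k m * w m = w n := by
  rw [sum_mul_sum_comm_of_band (fun k m h => lowerInv_of_lt A (by omega)) w n]
  simp [sum_mul_lowerInv hA]

theorem eq_of_sum_mul_eq_sum_mul {A X Y : ℕ → ℕ → R} (hA : ∀ n, A n n = 1)
    (h : ∀ n ℓ, ∑ k ∈ range (n + 1), A n k * X k ℓ = ∑ k ∈ range (n + 1), A n k * Y k ℓ)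
    (n ℓ : ℕ) : X n ℓ = Y n ℓ := by
  induction n using Nat.strong_induction_on generalizing ℓ with
  | _ n ih =>
    have hn := h n ℓ
    rw [Finset.sum_range_succ, Finset.sum_range_succ, hA, one_mul, one_mul,
      Finset.sum_congr rfl fun k hk => by rw [ih k (by simpa using hk) ℓ]] at hn
    exact add_left_cancel hn

theorem exists_eq_sum_mul_of_sum_mul_eq {A X B' C : ℕ → ℕ → R} {c : ℕ}
    (hA : ∀ n, A n n = 1) (hX : ∀ n k, n + c ≤ k → X n k = 0)
    (h : ∀ n ℓ, ∑ k ∈ range (n + c), X n k * B' k ℓ = ∑ k ∈ range (n + 1), A n k * C k ℓ) :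
    ∃ E : ℕ → ℕ → R, (∀ n ℓ, ∑ k ∈ range (n + 1), A n k * E k ℓ = X n ℓ) ∧
      (∀ n m, n + c ≤ m → E n m = 0) ∧
      ∀ n ℓ, ∑ m ∈ range (n + c), E n m * B' m ℓ = C n ℓ := by
  set E : ℕ → ℕ → R := fun n m => ∑ k ∈ range (n + 1), lowerInv A n k * X k m
  have hAE : ∀ n ℓ, ∑ k ∈ range (n + 1), A n k * E k ℓ = X n ℓ := fun n ℓ =>
    sum_mul_sum_lowerInv_mul hA (fun m => X m ℓ) n
  have hE : ∀ n m, n + c ≤ m → E n m = 0 := fun n m hm =>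
    Finset.sum_eq_zero fun k hk => by rw [hX k m (by simp at hk; omega), mul_zero]
  refine ⟨E, hAE, hE, eq_of_sum_mul_eq_sum_mul hA fun n ℓ => ?_⟩
  rw [sum_mul_sum_comm_of_band hE (fun m => B' m ℓ) n]
  simp_rw [hAE]
  exact h n ℓ

theorem eq_zero_of_sum_mul_upper_eq_zero [NoZeroDivisors R] {e : ℕ → R} {B : ℕ → ℕ → R}
    (hB : ∀ n ℓ, ℓ < n → B n ℓ = 0) (hBd : ∀ n, B n n ≠ 0) {N c : ℕ}
    (h : ∀ ℓ, ℓ < c → ∑ k ∈ range N, e k * B k ℓ = 0) {m : ℕ} (hmc : m < c) (hmN : m < N) :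
    e m = 0 := by
  induction m using Nat.strong_induction_on with
  | _ m ih =>
    have hm := h m hmc
    rw [Finset.sum_eq_single_of_mem m (Finset.mem_range.2 hmN) fun k _ hkm => by
      rcases lt_or_gt_of_ne hkm with hk | hk
      · rw [ih k hk (by omega) (by omega), zero_mul]
      · rw [hB k m hk, mul_zero]] at hm
    exact (mul_eq_zero.1 hm).resolve_right (hBd m)

end InfiniteMatrix

theorem momentMatrix_Vsys {r j : ℕ} (hr : 0 < r) (hj : j ≤ r) (v : ℕ → LF) (n ℓ : ℕ) :
    momentMatrix r (Vsys r j v) n ℓ = v ((j + ℓ) % r) (X ^ ((j + ℓ) / r + n)) := by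
  have divMod : ∀ s q, s < r → (s + r * q) % r = s ∧ (s + r * q) / r = q := fun s q hs => by
    rw [Nat.add_mul_mod_self_left, Nat.add_mul_div_left _ _ hr, Nat.mod_eq_of_lt hs,
      Nat.div_eq_of_lt hs, zero_add]
    exact ⟨rfl, rfl⟩
  have hs : ℓ % r < r := Nat.mod_lt ℓ hr
  have hdm := Nat.mod_add_div ℓ r
  rw [momentMatrix, Vsys]
  split_ifs with h
  · obtain ⟨hmod, hdiv⟩ := divMod (j + ℓ % r) (ℓ / r) h
    rw [show j + ℓ = j + ℓ % r + r * (ℓ / r) by omega, hmod, hdiv]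
  · obtain ⟨hmod, hdiv⟩ := divMod (j + ℓ % r - r) (ℓ / r + 1) (by omega)
    rw [show j + ℓ = j + ℓ % r - r + r * (ℓ / r + 1) by rw [mul_add]; omega, hmod, hdiv,
      xMul, LinearMap.comp_apply, LinearMap.mulLeft_apply, ← pow_succ', add_right_comm]

theorem momentMatrix_Vsys_succ {r j : ℕ} (hj : j < r) (v : ℕ → LF) (n ℓ : ℕ) :
    momentMatrix r (Vsys r (j + 1) v) n ℓ = momentMatrix r (Vsys r j v) n (ℓ + 1) := by
  rw [momentMatrix_Vsys (by omega) (show j + 1 ≤ r from hj), momentMatrix_Vsys (by omega) hj.le,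
    add_right_comm, add_assoc]

theorem momentMatrix_Vsys_self {r : ℕ} (hr : 0 < r) (v : ℕ → LF) (n ℓ : ℕ) :
    momentMatrix r (Vsys r r v) n ℓ = momentMatrix r (Vsys r 0 v) (n + 1) ℓ := by
  rw [momentMatrix_Vsys hr le_rfl, momentMatrix_Vsys hr (Nat.zero_le r), Nat.add_mod_left,
    Nat.add_div_left _ hr, zero_add, add_right_comm, add_assoc]

namespace GaussBorel

variable {r : ℕ} {v v' : ℕ → LF} {A B A' B' : ℕ → ℕ → ℂ}

theorem A_eq_of_col_shift (h : GaussBorel r v A B) (h' : GaussBorel r v' A' B')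
    (hM : ∀ n ℓ, momentMatrix r v' n ℓ = momentMatrix r v n (ℓ + 1)) (n ℓ : ℕ) :
    A' n ℓ = A n ℓ + B (ℓ + 1) (ℓ + 1) / B' ℓ ℓ * A n (ℓ + 1) := by
  obtain ⟨E, hAE, hEup, hEB⟩ := exists_eq_sum_mul_of_sum_mul_eq (c := 1) (X := A') (B' := B')
    (C := fun k ℓ => B k (ℓ + 1)) h.A_diag (fun n k hk => h'.A_upper n k (by omega))
    (fun n ℓ => by rw [← h'.factor, hM, h.factor])
  have hElow : ∀ n m, m + 1 < n → E n m = 0 := fun n m hm =>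
    eq_zero_of_sum_mul_upper_eq_zero h'.B_lower h'.B_diag (c := n - 1) (N := n + 1)
      (fun ℓ hℓ => by rw [hEB]; exact h.B_lower n (ℓ + 1) (by omega)) (by omega) (by omega)
  have hEdiag : E ℓ ℓ = 1 := by
    have hAE' := hAE ℓ ℓ
    rwa [Finset.sum_eq_single_of_mem ℓ (by simp) fun k hk hkℓ => by
        rw [hEup k ℓ (by simp at hk; omega), mul_zero],
      h.A_diag, one_mul, h'.A_diag] at hAE'
  have hEsub : E (ℓ + 1) ℓ * B' ℓ ℓ = B (ℓ + 1) (ℓ + 1) := by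
    rw [← hEB (ℓ + 1) ℓ, Finset.sum_eq_single_of_mem ℓ (by simp) fun k hk hkℓ => ?_]
    rcases lt_or_gt_of_ne hkℓ with hk' | hk'
    · rw [hElow _ k (by omega), zero_mul]
    · rw [h'.B_lower k ℓ hk', mul_zero]
  rw [← hAE n ℓ, sum_range_mul_eq_add (i := ℓ) (j := ℓ + 1) (by omega)
      (fun k hk => h.A_upper n k (by omega)) fun k hk hk' => ?_,
    hEdiag, eq_div_of_mul_eq (h'.B_diag ℓ) hEsub, mul_one, mul_comm]
  rcases lt_or_gt_of_ne hk with hk | hk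
  · exact hEup k ℓ (by omega)
  · exact hElow k ℓ (by omega)

theorem A_succ_eq_of_row_shift (h : GaussBorel r v A B) (h' : GaussBorel r v' A' B')
    (hM : ∀ n ℓ, momentMatrix r v n ℓ = momentMatrix r v' (n + 1) ℓ) (n ℓ : ℕ) :
    A' (n + 1) ℓ = B ℓ ℓ / B' ℓ ℓ * A n ℓ + if ℓ = 0 then 0 else A n (ℓ - 1) := by
  obtain ⟨E, hAE, hEup, hEB⟩ := exists_eq_sum_mul_of_sum_mul_eq (c := 2)
    (X := fun k m => A' (k + 1) m) (B' := B') (C := B) h.A_diag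
    (fun n k hk => h'.A_upper (n + 1) k (by omega))
    (fun n ℓ => by rw [← h.factor, hM]; exact (h'.factor (n + 1) ℓ).symm)
  have hElow : ∀ n m, m < n → E n m = 0 := fun n m hm =>
    eq_zero_of_sum_mul_upper_eq_zero h'.B_lower h'.B_diag (c := n) (N := n + 2)
      (fun ℓ hℓ => by rw [hEB]; exact h.B_lower n ℓ hℓ) hm (by omega)
  have hEsup : ∀ m, E m (m + 1) = 1 := fun m => by
    have hAE' := hAE m (m + 1)
    rwa [Finset.sum_eq_single_of_mem m (by simp) fun k hk hkm => by
        rw [hEup k (m + 1) (by simp at hk; omega), mul_zero],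
      h.A_diag, one_mul, h'.A_diag] at hAE'
  have hEdiag : E ℓ ℓ * B' ℓ ℓ = B ℓ ℓ := by
    rw [← hEB ℓ ℓ, Finset.sum_eq_single_of_mem ℓ (by simp) fun k hk hkℓ => ?_]
    rcases lt_or_gt_of_ne hkℓ with hk' | hk'
    · rw [hElow _ k hk', zero_mul]
    · rw [h'.B_lower k ℓ hk', mul_zero]
  rw [← hAE n ℓ, ← eq_div_of_mul_eq (h'.B_diag ℓ) hEdiag]
  rcases ℓ with _ | m
  · rw [Finset.sum_eq_single_of_mem 0 (by simp) fun k _ hk => by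
      rw [hElow k 0 (by omega), mul_zero]]
    simp [mul_comm]
  · rw [sum_range_mul_eq_add (i := m + 1) (j := m) (by omega)
      (fun k hk => h.A_upper n k (by omega)) fun k hk hk' => ?_, hEsup]
    · simp [mul_comm]
    rcases lt_or_gt_of_ne hk with hk | hk
    · exact hEup k (m + 1) (by omega)
    · exact hElow k (m + 1) hk

end GaussBorel

theorem Lmat_of_lt (r c : ℕ) (α : ℕ → ℂ) {n ℓ : ℕ} (h : n < ℓ) : Lmat r c α n ℓ = 0 := by
  rw [Lmat, if_neg (by omega), if_neg (by omega)]

theorem Umat_of_succ_lt (r : ℕ) (α : ℕ → ℂ) {n ℓ : ℕ} (h : n + 1 < ℓ) : Umat r α n ℓ = 0 := by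
  rw [Umat, if_neg (by omega), if_neg (by omega)]

theorem bidMul_Lmat {X : ℕ → ℕ → ℂ} (hX : ∀ n ℓ, n + 1 < ℓ → X n ℓ = 0) (r c : ℕ) (α : ℕ → ℂ)
    (n ℓ : ℕ) : bidMul X (Lmat r c α) n ℓ = X n ℓ + α ((r + 1) * ℓ + c) * X n (ℓ + 1) := by
  rw [bidMul, sum_range_mul_eq_add (i := ℓ) (j := ℓ + 1) (by omega)
    (fun k hk => hX n k (by omega)) fun k hk hk' => by rw [Lmat, if_neg (Ne.symm hk), if_neg hk']]
  simp [Lmat, mul_comm]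

theorem bidMul_Umat {X : ℕ → ℕ → ℂ} (hX : ∀ n ℓ, n < ℓ → X n ℓ = 0) (r : ℕ) (α : ℕ → ℂ)
    (n ℓ : ℕ) : bidMul X (Umat r α) n ℓ
      = α ((r + 1) * ℓ) * X n ℓ + if ℓ = 0 then 0 else X n (ℓ - 1) := by
  rw [bidMul]
  rcases ℓ with _ | m
  · rw [Finset.sum_eq_single_of_mem 0 (by simp) fun k _ hk => by simp [Umat, Ne.symm hk]]
    simp [Umat, mul_comm]
  · rw [sum_range_mul_eq_add (i := m + 1) (j := m) (by omega)
      (fun k hk => hX n k (by omega)) fun k hk hk' => by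
        rw [Umat, if_neg (Ne.symm hk), if_neg (by omega)]]
    simp [Umat, mul_comm]

theorem bidMul_listProd_nil {X : ℕ → ℕ → ℂ} (hX : ∀ n ℓ, n + 1 < ℓ → X n ℓ = 0) (n ℓ : ℕ) :
    bidMul X (listProd []) n ℓ = X n ℓ := by
  rw [bidMul, listProd]
  simp_rw [mul_ite, mul_one, mul_zero]
  rw [Finset.sum_ite_eq']
  split_ifs with h
  · rfl
  · exact (hX n ℓ (by simp at h; omega)).symm

-- `bidMul` truncates row `n` of the left factor at column `n + 1`, which only drops the term
-- `X n (n + 1) * F (n + 1) (n + 2)` of the product `X F`.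
theorem bidMul_assoc {X F : ℕ → ℕ → ℂ} (hF : ∀ n ℓ, n + 1 < ℓ → F n ℓ = 0)
    (hXF : ∀ n, X n (n + 1) * F (n + 1) (n + 2) = 0) (P : ℕ → ℕ → ℂ) (n ℓ : ℕ) :
    bidMul X (bidMul F P) n ℓ = bidMul (bidMul X F) P n ℓ := by
  have hlast : ∑ k ∈ range (n + 2), X n k * F k (n + 2) = 0 := by
    rw [Finset.sum_eq_single_of_mem (n + 1) (by simp) fun k hk hkn => by
      rw [hF k (n + 2) (by simp at hk; omega), mul_zero]]
    exact hXF n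
  simp only [bidMul]
  rw [sum_mul_sum_comm_of_band (c := 2) (fun k m h => hF k m (by omega)) (fun m => P m ℓ) (n + 1),
    show n + 1 + 2 = n + 2 + 1 by omega, Finset.sum_range_succ, hlast, zero_mul, add_zero]

theorem bidMul_listProd_cons {X F Y : ℕ → ℕ → ℂ} (hF : ∀ n ℓ, n + 1 < ℓ → F n ℓ = 0)
    (hXF : ∀ n, X n (n + 1) * F (n + 1) (n + 2) = 0) (hY : ∀ n ℓ, bidMul X F n ℓ = Y n ℓ)
    (Fs : List (ℕ → ℕ → ℂ)) (n ℓ : ℕ) :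
    bidMul X (listProd (F :: Fs)) n ℓ = bidMul Y (listProd Fs) n ℓ := by
  rw [listProd, bidMul_assoc hF hXF, show bidMul X F = Y from funext₂ hY]

theorem bidMul_listProd_Lmat_append {r : ℕ} {α : ℕ → ℂ} {X : ℕ → ℕ → ℕ → ℂ}
    (hX : ∀ i, i < r → ∀ n ℓ, bidMul (X i) (Lmat r (i + 1) α) n ℓ = X (i + 1) n ℓ)
    (m i : ℕ) (hm : i + m ≤ r) (tail : List (ℕ → ℕ → ℂ)) (n ℓ : ℕ) :
    bidMul (X i) (listProd ((List.range' (i + 1) m).map (fun k => Lmat r k α) ++ tail)) n ℓ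
      = bidMul (X (i + m)) (listProd tail) n ℓ := by
  induction m generalizing i with
  | zero => rfl
  | succ m ih =>
    rw [List.range'_succ, List.map_cons, List.cons_append,
      bidMul_listProd_cons (fun n ℓ h => Lmat_of_lt r _ α (by omega))
        (fun n => by rw [Lmat_of_lt r _ α (by omega), mul_zero]) (hX i (by omega)),
      ih (i + 1) (by omega), add_assoc, add_comm 1 m]

theorem alphaGB_mul (r : ℕ) (B : ℕ → ℕ → ℕ → ℂ) (n : ℕ) :
    alphaGB r B ((r + 1) * n) = B r n n / B 0 n n := by
  rw [alphaGB, Nat.mul_mod_right, if_pos rfl, Nat.mul_div_cancel_left _ r.succ_pos]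

theorem alphaGB_mul_add_succ {r i : ℕ} (hi : i < r) (B : ℕ → ℕ → ℕ → ℂ) (n : ℕ) :
    alphaGB r B ((r + 1) * n + (i + 1)) = B i (n + 1) (n + 1) / B (i + 1) n n := by
  have hmod : ((r + 1) * n + (i + 1)) % (r + 1) = i + 1 := by
    rw [Nat.mul_add_mod, Nat.mod_eq_of_lt (by omega)]
  have hdiv : ((r + 1) * n + (i + 1)) / (r + 1) = n := by
    rw [Nat.mul_add_div r.succ_pos, Nat.div_eq_of_lt (by omega), add_zero]
  rw [alphaGB, hmod, hdiv, if_neg (by omega), Nat.add_sub_cancel]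

section Darboux

variable {r : ℕ} {v : ℕ → LF} {A B : ℕ → ℕ → ℕ → ℂ}

theorem A_succ_eq_of_gaussBorel (hGB : ∀ j, j ≤ r → GaussBorel r (Vsys r j v) (A j) (B j))
    {i : ℕ} (hi : i < r) (n ℓ : ℕ) :
    A (i + 1) n ℓ = A i n ℓ + alphaGB r B ((r + 1) * ℓ + (i + 1)) * A i n (ℓ + 1) := by
  rw [alphaGB_mul_add_succ hi, (hGB i hi.le).A_eq_of_col_shift (hGB (i + 1) hi)
    (momentMatrix_Vsys_succ hi v)]

theorem A_zero_succ_eq_of_gaussBorel (hr : 1 ≤ r)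
    (hGB : ∀ j, j ≤ r → GaussBorel r (Vsys r j v) (A j) (B j)) (n ℓ : ℕ) :
    A 0 (n + 1) ℓ = alphaGB r B ((r + 1) * ℓ) * A r n ℓ + if ℓ = 0 then 0 else A r n (ℓ - 1) := by
  rw [alphaGB_mul, (hGB r le_rfl).A_succ_eq_of_row_shift (hGB 0 (Nat.zero_le r))
    (momentMatrix_Vsys_self hr v)]

theorem bidMul_listProd_factorList (hr : 1 ≤ r)
    (hGB : ∀ j, j ≤ r → GaussBorel r (Vsys r j v) (A j) (B j)) {j : ℕ} (hj : j ≤ r) (n ℓ : ℕ) :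
    bidMul (A j) (listProd (factorList r j (alphaGB r B))) n ℓ = A j (n + 1) ℓ := by
  have hL : ∀ i, i < r → ∀ n ℓ, bidMul (A i) (Lmat r (i + 1) (alphaGB r B)) n ℓ = A (i + 1) n ℓ :=
    fun i hi n ℓ => by
      rw [bidMul_Lmat (fun n ℓ h => (hGB i hi.le).A_upper n ℓ (by omega)),
        A_succ_eq_of_gaussBorel hGB hi]
  have hΛL : ∀ i, i < r → ∀ n ℓ, bidMul (fun n ℓ => A i (n + 1) ℓ) (Lmat r (i + 1) (alphaGB r B))
      n ℓ = A (i + 1) (n + 1) ℓ :=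
    fun i hi n ℓ => by
      rw [bidMul_Lmat (fun n ℓ h => (hGB i hi.le).A_upper (n + 1) ℓ (by omega)),
        A_succ_eq_of_gaussBorel hGB hi]
  have hU : ∀ n ℓ, bidMul (A r) (Umat r (alphaGB r B)) n ℓ = A 0 (n + 1) ℓ := fun n ℓ => by
    rw [bidMul_Umat (hGB r le_rfl).A_upper, A_zero_succ_eq_of_gaussBorel hr hGB]
  rw [factorList, List.append_assoc, bidMul_listProd_Lmat_append hL (r - j) j (by omega),
    Nat.add_sub_cancel' hj, List.singleton_append,
    bidMul_listProd_cons (fun n ℓ h => Umat_of_succ_lt r _ h)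
      (fun n => by rw [(hGB r le_rfl).A_upper n (n + 1) (by omega), zero_mul]) hU,
    ← List.append_nil (List.map _ _),
    bidMul_listProd_Lmat_append (X := fun i n ℓ => A i (n + 1) ℓ) hΛL j 0 (by omega),
    zero_add, bidMul_listProd_nil fun n ℓ h => (hGB j hj).A_upper (n + 1) ℓ (by omega)]

end Darboux

theorem stmt4 (r : ℕ) (hr : 1 ≤ r) (v : ℕ → LF) (A B : ℕ → ℕ → ℕ → ℂ)
    (hGB : ∀ j, j ≤ r → GaussBorel r (Vsys r j v) (A j) (B j)) :
    -- (a) formulas for the `α`'s via the `A^{[j]}`'s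
    ((∀ n, alphaGB r B ((r + 1) * n)
        = A 0 (n + 1) n - (if n = 0 then 0 else A r n (n - 1))) ∧
     (∀ n i, 1 ≤ i → i ≤ r →
        alphaGB r B ((r + 1) * n + i) = A i (n + 1) n - A (i - 1) (n + 1) n)) ∧
    -- (b) the Hessenberg matrix `H^{[j]}` (determined by `A^{[j]} H^{[j]} = Λ A^{[j]}`)
    -- factorises as `L_{j+1} ⋯ L_r U L_1 ⋯ L_j`
    (∀ j, j ≤ r → ∀ H : ℕ → ℕ → ℂ,
      (∀ n ℓ, ∑ k ∈ Finset.range (n + 1), A j n k * H k ℓ = A j (n + 1) ℓ) →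
      ∀ n ℓ, H n ℓ = listProd (factorList r j (alphaGB r B)) n ℓ) := by
  refine ⟨⟨fun n => ?_, fun n i hi hir => ?_⟩, fun j hj H hH => ?_⟩
  · rw [A_zero_succ_eq_of_gaussBorel hr hGB, (hGB r le_rfl).A_diag]
    ring
  · obtain ⟨i, rfl⟩ : ∃ i', i = i' + 1 := ⟨i - 1, by omega⟩
    rw [Nat.add_sub_cancel, A_succ_eq_of_gaussBorel hGB hir, (hGB i (by omega)).A_diag]
    ring
  · refine eq_of_sum_mul_eq_sum_mul (hGB j hj).A_diag (fun n ℓ => ?_)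
    rw [hH, ← bidMul_listProd_factorList hr hGB hj, bidMul, Finset.sum_range_succ _ (n + 1),
      (hGB j hj).A_upper n (n + 1) (by omega), zero_mul, add_zero]
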